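/- Let (Y,T) be a 3-equivalenced association scheme. For all u, v ∈ T ∖ {1_Y} with u ≠ v*, exactly one of the following holds: (i) there are three pairwise distinct w₁, w₂, w₃ ∈ T ∖ {1_Y} with σ_u σ_v = σ_{w₁} + σ_{w₂} + σ_{w₃}; or (ii) there are two distinct w₁, w₂ ∈ T ∖ {1_Y} with σ_u σ_v = σ_{w₁} + 2 σ_{w₂}. -/

import Mathlib

open Matrix BigOperators Kronecker
open scoped Classical

section Defs

variable {Z : Type*} [Fintype Z] [DecidableEq Z]

/-- The identity (diagonal) relation on `Z`. -/
def diagRel (Z : Type*) [Fintype Z] [DecidableEq Z] : Finset (Z × Z) :=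
  Finset.univ.filter fun p => p.1 = p.2

/-- The converse relation. -/
def convRel (s : Finset (Z × Z)) : Finset (Z × Z) := s.image fun p => (p.2, p.1)

/-- The intersection number `p_{st}^u`, computed at an arbitrary pair of `u`. -/
noncomputable def pNum (s t u : Finset (Z × Z)) : ℕ :=
  if h : u.Nonempty then
    (Finset.univ.filter fun z => (h.choose.1, z) ∈ s ∧ (z, h.choose.2) ∈ t).card
  else 0

/-- The valency `n_s = p_{s s*}^{1}`. -/
noncomputable def valency (s : Finset (Z × Z)) : ℕ := pNum s (convRel s) (diagRel Z)

/-- The adjacency matrix of a relation. -/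
def adjMat (s : Finset (Z × Z)) : Matrix Z Z ℂ :=
  Matrix.of fun x y => if (x, y) ∈ s then 1 else 0

/-- The diagonal 0/1 matrix of a subset. -/
def eps (U : Finset Z) : Matrix Z Z ℂ := Matrix.diagonal fun i => if i ∈ U then 1 else 0

/-- The all-ones matrix. -/
def allOnes (Z : Type*) : Matrix Z Z ℂ := Matrix.of fun _ _ => 1

/-- `pointFiber x s = xs = {y : (x,y) ∈ s}`. -/
def pointFiber (x : Z) (s : Finset (Z × Z)) : Finset Z :=
  Finset.univ.filter fun y => (x, y) ∈ s

/-- An association scheme on a finite set `Z`: a partition of `Z × Z` into nonempty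
relations containing the identity relation, closed under converse, and with
well-defined intersection numbers. -/
structure AssocScheme (Z : Type*) [Fintype Z] [DecidableEq Z] where
  rels : Finset (Finset (Z × Z))
  nonempty_mem : ∀ s ∈ rels, s.Nonempty
  cover : ∀ p : Z × Z, ∃ s ∈ rels, p ∈ s
  pairwise_disjoint : ∀ s ∈ rels, ∀ t ∈ rels, s ≠ t → Disjoint s t
  id_mem : diagRel Z ∈ rels
  conv_mem : ∀ s ∈ rels, convRel s ∈ rels
  pconst : ∀ s ∈ rels, ∀ t ∈ rels, ∀ u ∈ rels, ∀ p ∈ u, ∀ q ∈ u,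
    (Finset.univ.filter fun z => (p.1, z) ∈ s ∧ (z, p.2) ∈ t).card =
    (Finset.univ.filter fun z => (q.1, z) ∈ s ∧ (z, q.2) ∈ t).card

/-- A scheme is 3-equivalenced when it has more than one point and every
non-identity basic relation has valency 3. -/
def ThreeEquivalenced (B : AssocScheme Z) : Prop :=
  1 < Fintype.card Z ∧ ∀ t ∈ B.rels, t ≠ diagRel Z → valency t = 3

/-- A scheme is k-equivalenced when it has more than one point and every
non-identity basic relation has valency k. -/
def KEquivalenced (B : AssocScheme Z) (k : ℕ) : Prop :=
  1 < Fintype.card Z ∧ ∀ t ∈ B.rels, t ≠ diagRel Z → valency t = k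

/-- A scheme is imprimitive if some union of basic relations is an equivalence
relation different from the identity relation and from the full relation. -/
def Imprimitive (B : AssocScheme Z) : Prop :=
  ∃ R ⊆ B.rels, Equivalence (fun x y : Z => (x, y) ∈ R.sup id) ∧
    R.sup id ≠ diagRel Z ∧ R.sup id ≠ Finset.univ

/-- A coherent algebra: a subalgebra of the matrix algebra containing the all-ones
matrix (and the identity), closed under conjugate transpose and Hadamard product. -/
def IsCoherent (𝒜 : Subalgebra ℂ (Matrix Z Z ℂ)) : Prop :=
  allOnes Z ∈ 𝒜 ∧ (∀ M ∈ 𝒜, Mᴴ ∈ 𝒜) ∧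
  ∀ M ∈ 𝒜, ∀ N ∈ 𝒜, Matrix.hadamard M N ∈ 𝒜

/-- The one-point-extension algebra: the smallest coherent algebra containing all
adjacency matrices of the scheme and the diagonal matrix unit at `x`. -/
noncomputable def onePointAlg (B : AssocScheme Z) (x : Z) : Subalgebra ℂ (Matrix Z Z ℂ) :=
  sInf {𝒜 | IsCoherent 𝒜 ∧ (∀ s ∈ B.rels, adjMat s ∈ 𝒜) ∧ eps {x} ∈ 𝒜}

/-- A matrix has only 0/1 entries. -/
def IsZeroOne (M : Matrix Z Z ℂ) : Prop := ∀ i j, M i j = 0 ∨ M i j = 1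

/-- A basic relation matrix of a coherent algebra: a nonzero 0/1 matrix in the
algebra whose only 0/1 minorants in the algebra are 0 and itself. -/
def IsBasicMatrix (𝒜 : Subalgebra ℂ (Matrix Z Z ℂ)) (B : Matrix Z Z ℂ) : Prop :=
  B ∈ 𝒜 ∧ IsZeroOne B ∧ B ≠ 0 ∧
  ∀ C ∈ 𝒜, IsZeroOne C → (∀ i j, C i j = 1 → B i j = 1) → C = 0 ∨ C = B

/-- The Terwilliger algebra of a scheme with respect to the base point `x`. -/
noncomputable def terwAlg (B : AssocScheme Z) (x : Z) : Subalgebra ℂ (Matrix Z Z ℂ) :=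
  Algebra.adjoin ℂ
    ({M | ∃ s ∈ B.rels, M = adjMat s} ∪ {M | ∃ s ∈ B.rels, M = eps (pointFiber x s)})

/-- A central primitive idempotent of a (set underlying a) matrix algebra: a nonzero
central idempotent that is not the sum of two nonzero orthogonal central idempotents. -/
def IsCPI {n : Type*} [Fintype n] [DecidableEq n] (𝒜 : Set (Matrix n n ℂ))
    (e : Matrix n n ℂ) : Prop :=
  e ∈ 𝒜 ∧ e ≠ 0 ∧ e * e = e ∧ (∀ a ∈ 𝒜, a * e = e * a) ∧
  ¬∃ f g : Matrix n n ℂ, f ∈ 𝒜 ∧ g ∈ 𝒜 ∧ f ≠ 0 ∧ g ≠ 0 ∧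
    f * f = f ∧ g * g = g ∧ (∀ a ∈ 𝒜, a * f = f * a) ∧ (∀ a ∈ 𝒜, a * g = g * a) ∧
    f * g = 0 ∧ g * f = 0 ∧ e = f + g

/-- The trivial central primitive idempotent
`∑_{s∈S} n_s⁻¹ ε_{x s} J ε_{x s}` of the Terwilliger algebra. -/
noncomputable def trivTerwIdem (B : AssocScheme Z) (x : Z) : Matrix Z Z ℂ :=
  ∑ s ∈ B.rels, ((valency s : ℂ)⁻¹) •
    (eps (pointFiber x s) * allOnes Z * eps (pointFiber x s))

/-- The adjacency algebra `A(S) = span{σ_s : s ∈ S}` as a set of matrices. -/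
def adjAlgSet (B : AssocScheme Z) : Set (Matrix Z Z ℂ) :=
  ↑(Submodule.span ℂ {M | ∃ s ∈ B.rels, M = adjMat s})

end Defs

section Wreath

variable {X Y : Type*} [Fintype X] [DecidableEq X] [Fintype Y] [DecidableEq Y]

/-- Generators of the Terwilliger algebra of the wreath product at `(x₀, y₀)`. -/
def wreathGens (A : AssocScheme X) (B : AssocScheme Y) (x₀ : X) (y₀ : Y) :
    Set (Matrix (X × Y) (X × Y) ℂ) :=
  {M | ∃ s ∈ A.rels, M = adjMat s ⊗ₖ (1 : Matrix Y Y ℂ)} ∪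
  {M | ∃ s ∈ A.rels, M = eps (pointFiber x₀ s) ⊗ₖ eps ({y₀} : Finset Y)} ∪
  {M | ∃ t ∈ B.rels, t ≠ diagRel Y ∧ M = allOnes X ⊗ₖ adjMat t} ∪
  {M | ∃ t ∈ B.rels, t ≠ diagRel Y ∧ M = (1 : Matrix X X ℂ) ⊗ₖ eps (pointFiber y₀ t)}

/-- The Terwilliger algebra of the wreath product at `(x₀, y₀)`. -/
noncomputable def wreathTerw (A : AssocScheme X) (B : AssocScheme Y) (x₀ : X) (y₀ : Y) :
    Subalgebra ℂ (Matrix (X × Y) (X × Y) ℂ) :=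
  Algebra.adjoin ℂ (wreathGens A B x₀ y₀)

/-- The relation `s̃` of the wreath product coming from `s ∈ S`. -/
def tildeRel (s : Finset (X × X)) : Finset ((X × Y) × (X × Y)) :=
  Finset.univ.filter fun p => (p.1.1, p.2.1) ∈ s ∧ p.1.2 = p.2.2

/-- The relation `t̄` of the wreath product coming from `t ∈ T \ {1}`. -/
def barRel (t : Finset (Y × Y)) : Finset ((X × Y) × (X × Y)) :=
  Finset.univ.filter fun p => (p.1.2, p.2.2) ∈ t

/-- The basic relations of the wreath product `S ≀ T`. -/
def wreathRels (A : AssocScheme X) (B : AssocScheme Y) :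
    Finset (Finset ((X × Y) × (X × Y))) :=
  A.rels.image (tildeRel (Y := Y)) ∪ (B.rels.erase (diagRel Y)).image (barRel (X := X))

/-- The trivial central primitive idempotent
`e₀ = ∑_u n_u⁻¹ ε_{(x₀,y₀)u} J ε_{(x₀,y₀)u}` of `T(S ≀ T)`. -/
noncomputable def wreathTriv (A : AssocScheme X) (B : AssocScheme Y) (x₀ : X) (y₀ : Y) :
    Matrix (X × Y) (X × Y) ℂ :=
  ∑ u ∈ wreathRels A B, ((valency u : ℂ)⁻¹) •
    (eps (pointFiber (x₀, y₀) u) * allOnes (X × Y) * eps (pointFiber (x₀, y₀) u))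

/-- `ω = e^{2πi/3}`. -/
noncomputable def omega3 : ℂ := Complex.exp (2 * Real.pi * Complex.I / 3)

/-- The shifted matching matrix `∑_i E_{y_{t(i)}, y_{t'(i+k)}}` on `y₀t × y₀t'`. -/
noncomputable def cyc (enum : Finset (Y × Y) → Fin 3 → Y) (t t' : Finset (Y × Y))
    (k : Fin 3) : Matrix Y Y ℂ :=
  ∑ i : Fin 3, Matrix.single (enum t i) (enum t' (i + k)) 1

/-- `G_{y₀t, y₀t'}`. -/
noncomputable def Gmat (X : Type*) [Fintype X] (enum : Finset (Y × Y) → Fin 3 → Y)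
    (t t' : Finset (Y × Y)) : Matrix (X × Y) (X × Y) ℂ :=
  ((3 * (Fintype.card X : ℂ))⁻¹) •
    (allOnes X ⊗ₖ (cyc enum t t' 0 + omega3 • cyc enum t t' 1 + omega3 ^ 2 • cyc enum t t' 2))

/-- `G'_{y₀t, y₀t'}`. -/
noncomputable def Gmat' (X : Type*) [Fintype X] (enum : Finset (Y × Y) → Fin 3 → Y)
    (t t' : Finset (Y × Y)) : Matrix (X × Y) (X × Y) ℂ :=
  ((3 * (Fintype.card X : ℂ))⁻¹) •
    (allOnes X ⊗ₖ (cyc enum t t' 0 + omega3 ^ 2 • cyc enum t t' 1 + omega3 • cyc enum t t' 2))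

/-- `enum` enumerates each set `y₀t` (for non-identity `t`) by `Fin 3`. -/
def IsEnum (B : AssocScheme Y) (y₀ : Y) (enum : Finset (Y × Y) → Fin 3 → Y) : Prop :=
  ∀ t ∈ B.rels, t ≠ diagRel Y →
    Function.Injective (enum t) ∧ ∀ y, y ∈ pointFiber y₀ t ↔ ∃ i, enum t i = y

/-- The enumerations are well-ordering: every basic relation matrix of the
one-point-extension algebra which is nonzero on `y₀t × y₀t'` restricts there to one of
the cyclic permutation matrices `I, C, C²`. -/
def IsWellOrdering (B : AssocScheme Y) (y₀ : Y) (enum : Finset (Y × Y) → Fin 3 → Y) : Prop :=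
  IsEnum B y₀ enum ∧
  ∀ t ∈ B.rels, t ≠ diagRel Y → ∀ t' ∈ B.rels, t' ≠ diagRel Y →
    ∀ M : Matrix Y Y ℂ, IsBasicMatrix (onePointAlg B y₀) M →
      (∃ i j : Fin 3, M (enum t i) (enum t' j) ≠ 0) →
      ∃ k : Fin 3, ∀ i j : Fin 3,
        M (enum t i) (enum t' j) = if j = i + k then 1 else 0

/-- The set of all matrices `G_{y₀t, y₀t'}`, `t, t' ∈ T₃`. -/
noncomputable def GmatSet (X : Type*) [Fintype X] (B : AssocScheme Y)
    (enum : Finset (Y × Y) → Fin 3 → Y) : Set (Matrix (X × Y) (X × Y) ℂ) :=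
  {M | ∃ t ∈ B.rels.erase (diagRel Y), ∃ t' ∈ B.rels.erase (diagRel Y), M = Gmat X enum t t'}

/-- The set of all matrices `G'_{y₀t, y₀t'}`, `t, t' ∈ T₃`. -/
noncomputable def GmatSet' (X : Type*) [Fintype X] (B : AssocScheme Y)
    (enum : Finset (Y × Y) → Fin 3 → Y) : Set (Matrix (X × Y) (X × Y) ℂ) :=
  {M | ∃ t ∈ B.rels.erase (diagRel Y), ∃ t' ∈ B.rels.erase (diagRel Y), M = Gmat' X enum t t'}

/-- `e_{η1} = ∑_{t ∈ T₃} G_{y₀t, y₀t}`. -/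
noncomputable def etaOne (X : Type*) [Fintype X] (B : AssocScheme Y)
    (enum : Finset (Y × Y) → Fin 3 → Y) : Matrix (X × Y) (X × Y) ℂ :=
  ∑ t ∈ B.rels.erase (diagRel Y), Gmat X enum t t

/-- `e_{η2} = ∑_{t ∈ T₃} G'_{y₀t, y₀t}`. -/
noncomputable def etaTwo (X : Type*) [Fintype X] (B : AssocScheme Y)
    (enum : Finset (Y × Y) → Fin 3 → Y) : Matrix (X × Y) (X × Y) ℂ :=
  ∑ t ∈ B.rels.erase (diagRel Y), Gmat' X enum t t

end Wreath

/-! Comparing row sums in `σ_u σ_v = ∑_w p_{uv}^w σ_w` gives `∑_w p_{uv}^w n_w = n_u n_v = 9`;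
as `u ≠ v*` kills the `w = 1` term, the coefficients `p_{uv}^w` sum to `3`. None of them is `3`:
that would force the three points of `yu` to share their `v`-neighbours, and then some point
would have four `v`-predecessors. So the nonzero coefficients are `1, 1, 1` or `1, 2`, and the two
shapes cannot both occur because a sum of distinct basic adjacency matrices is a 0/1 matrix. -/

section Relations

variable {Z : Type*} [DecidableEq Z]

@[simp]
lemma mem_diagRel [Fintype Z] {a b : Z} : (a, b) ∈ diagRel Z ↔ a = b := by
  simp [diagRel]

@[simp]
lemma mem_convRel {s : Finset (Z × Z)} {a b : Z} : (a, b) ∈ convRel s ↔ (b, a) ∈ s := by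
  simp [convRel]

@[simp]
lemma mem_pointFiber [Fintype Z] {s : Finset (Z × Z)} {x y : Z} :
    y ∈ pointFiber x s ↔ (x, y) ∈ s := by
  simp [pointFiber]

lemma convRel_ne_diagRel [Fintype Z] {s : Finset (Z × Z)} (hs : s ≠ diagRel Z) :
    convRel s ≠ diagRel Z := by
  contrapose! hs
  ext ⟨a, b⟩
  simpa [eq_comm, Iff.comm] using congrArg (fun r => (b, a) ∈ r) hs

lemma adjMat_mul_apply [Fintype Z] (s t : Finset (Z × Z)) (x y : Z) :
    (adjMat s * adjMat t) x y = (Finset.univ.filter fun z => (x, z) ∈ s ∧ (z, y) ∈ t).card := by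
  simp only [Matrix.mul_apply, adjMat, Matrix.of_apply, ite_mul, one_mul, zero_mul,
    Finset.card_filter, Nat.cast_sum, Nat.cast_ite, Nat.cast_one, Nat.cast_zero, ite_and]

lemma adjMat_mulVec_const [Fintype Z] (s : Finset (Z × Z)) (c : ℂ) (x : Z) :
    (adjMat s *ᵥ fun _ => c) x = (pointFiber x s).card * c := by
  simp only [Matrix.mulVec, dotProduct, adjMat, Matrix.of_apply, ite_mul, one_mul, zero_mul]
  rw [← Finset.sum_filter, Finset.sum_const, nsmul_eq_mul]
  rfl

lemma adjMat_union {s t : Finset (Z × Z)} (h : Disjoint s t) :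
    adjMat (s ∪ t) = adjMat s + adjMat t := by
  ext x y
  by_cases hs : (x, y) ∈ s
  · simp [adjMat, hs, Finset.disjoint_left.mp h hs]
  · simp [adjMat, hs]

lemma isZeroOne_adjMat (s : Finset (Z × Z)) : IsZeroOne (adjMat s) := by
  intro x y
  by_cases h : (x, y) ∈ s <;> simp [adjMat, h]

end Relations

lemma Finset.eq_triple_or_pair_of_sum_eq_three {ι : Type*} [DecidableEq ι] {S : Finset ι} {f : ι → ℕ}
    (hf : ∀ i ∈ S, f i = 1 ∨ f i = 2) (hsum : ∑ i ∈ S, f i = 3) :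
    (∃ a b c, a ≠ b ∧ a ≠ c ∧ b ≠ c ∧ S = {a, b, c} ∧ f a = 1 ∧ f b = 1 ∧ f c = 1) ∨
      ∃ a b, a ≠ b ∧ S = {a, b} ∧ f a = 1 ∧ f b = 2 := by
  by_cases h2 : ∃ b ∈ S, f b = 2
  · obtain ⟨b, hb, hfb⟩ := h2
    have hrest : ∑ i ∈ S.erase b, f i = 1 := by
      have := Finset.add_sum_erase S f hb
      omega
    have hcard : (S.erase b).card = 1 := by
      have hle := Finset.card_nsmul_le_sum (S.erase b) f 1
        fun i hi => by rcases hf i (Finset.mem_of_mem_erase hi) with h | h <;> omega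
      have hne : (S.erase b).Nonempty := by
        by_contra h
        rw [Finset.not_nonempty_iff_eq_empty.mp h, Finset.sum_empty] at hrest
        omega
      have := hne.card_pos
      simp only [hrest, smul_eq_mul, mul_one] at hle
      omega
    obtain ⟨a, ha⟩ := Finset.card_eq_one.mp hcard
    have haS : a ∈ S.erase b := ha ▸ Finset.mem_singleton_self a
    refine Or.inr ⟨a, b, Finset.ne_of_mem_erase haS, ?_, ?_, hfb⟩
    · rw [← Finset.insert_erase hb, ha, Finset.pair_comm]
    · rwa [ha, Finset.sum_singleton] at hrest
  · push Not at h2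
    have hone : ∀ i ∈ S, f i = 1 := fun i hi => (hf i hi).resolve_right (h2 i hi)
    have hcard : S.card = 3 := by
      rwa [Finset.sum_congr rfl hone, Finset.sum_const, smul_eq_mul, mul_one] at hsum
    obtain ⟨a, b, c, hab, hac, hbc, rfl⟩ := Finset.card_eq_three.mp hcard
    exact Or.inl ⟨a, b, c, hab, hac, hbc, rfl, hone a (by simp), hone b (by simp),
      hone c (by simp)⟩

namespace AssocScheme

variable {Z : Type*} [Fintype Z] [DecidableEq Z]

lemma nonempty (B : AssocScheme Z) : Nonempty Z := by
  obtain ⟨⟨x, -⟩, -⟩ := B.nonempty_mem _ B.id_mem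
  exact ⟨x⟩

variable (B : AssocScheme Z) {s t r : Finset (Z × Z)}

lemma eq_of_mem_of_mem (hs : s ∈ B.rels) (ht : t ∈ B.rels) {p : Z × Z} (hps : p ∈ s)
    (hpt : p ∈ t) : s = t := by
  by_contra h
  exact Finset.disjoint_left.mp (B.pairwise_disjoint s hs t ht h) hps hpt

lemma pNum_eq_card (hs : s ∈ B.rels) (ht : t ∈ B.rels) (hr : r ∈ B.rels) {p : Z × Z}
    (hp : p ∈ r) :
    pNum s t r = (Finset.univ.filter fun z => (p.1, z) ∈ s ∧ (z, p.2) ∈ t).card := by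
  have hne : r.Nonempty := ⟨p, hp⟩
  rw [pNum, dif_pos hne]
  exact B.pconst s hs t ht r hr _ hne.choose_spec p hp

lemma card_pointFiber (hs : s ∈ B.rels) (x : Z) : (pointFiber x s).card = valency s := by
  rw [valency, B.pNum_eq_card hs (B.conv_mem s hs) B.id_mem (mem_diagRel.mpr (rfl : x = x))]
  congr 1
  ext z
  simp

lemma filter_subset_pointFiber (s t : Finset (Z × Z)) (x y : Z) :
    (Finset.univ.filter fun z => (x, z) ∈ s ∧ (z, y) ∈ t) ⊆ pointFiber x s := by
  intro z
  simp +contextual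

lemma valency_pos (hs : s ∈ B.rels) : 0 < valency s := by
  obtain ⟨⟨x, y⟩, hxy⟩ := B.nonempty_mem s hs
  rw [← B.card_pointFiber hs x]
  exact Finset.card_pos.mpr ⟨y, mem_pointFiber.mpr hxy⟩

lemma pNum_le_valency (hs : s ∈ B.rels) (t r : Finset (Z × Z)) : pNum s t r ≤ valency s := by
  unfold pNum
  split_ifs with hr
  · rw [← B.card_pointFiber hs hr.choose.1]
    exact Finset.card_le_card (filter_subset_pointFiber s t _ _)
  · exact Nat.zero_le _

lemma mem_of_pNum_eq_valency (hs : s ∈ B.rels) (ht : t ∈ B.rels) (hr : r ∈ B.rels)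
    (h : pNum s t r = valency s) {x y z : Z} (hxy : (x, y) ∈ r) (hxz : (x, z) ∈ s) :
    (z, y) ∈ t := by
  have hsub := filter_subset_pointFiber s t x y
  have heq := Finset.eq_of_subset_of_card_le hsub <| by
    rw [B.card_pointFiber hs, ← h, B.pNum_eq_card hs ht hr hxy]
  have hz : z ∈ pointFiber x s := mem_pointFiber.mpr hxz
  rw [← heq] at hz
  exact (Finset.mem_filter.mp hz).2.2

lemma adjMat_mul_eq_sum (hs : s ∈ B.rels) (ht : t ∈ B.rels) :
    adjMat s * adjMat t = ∑ r ∈ B.rels, (pNum s t r : ℂ) • adjMat r := by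
  ext x y
  obtain ⟨r, hr, hxy⟩ := B.cover (x, y)
  rw [adjMat_mul_apply, ← B.pNum_eq_card hs ht hr hxy, Matrix.sum_apply,
    Finset.sum_eq_single_of_mem r hr]
  · simp [adjMat, hxy]
  · intro r' hr' hne
    have : (x, y) ∉ r' := fun h => hne (B.eq_of_mem_of_mem hr' hr h hxy)
    simp [adjMat, this]

lemma sum_pNum_mul_valency (hs : s ∈ B.rels) (ht : t ∈ B.rels) :
    ∑ r ∈ B.rels, pNum s t r * valency r = valency s * valency t := by
  obtain ⟨x⟩ := B.nonempty
  have h := congrFun (congrArg (· *ᵥ fun _ => (1 : ℂ)) (B.adjMat_mul_eq_sum hs ht)) x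
  simp only [← Matrix.mulVec_mulVec, Matrix.sum_mulVec, Matrix.smul_mulVec, Finset.sum_apply,
    Pi.smul_apply] at h
  have hrow : (adjMat t *ᵥ fun _ => (1 : ℂ)) = fun _ => (valency t : ℂ) :=
    funext fun y => by rw [adjMat_mulVec_const, B.card_pointFiber ht, mul_one]
  rw [hrow, adjMat_mulVec_const, B.card_pointFiber hs, Finset.sum_congr rfl fun r hr => by
    rw [adjMat_mulVec_const, B.card_pointFiber hr, mul_one, smul_eq_mul]] at h
  exact_mod_cast h.symm

lemma pNum_diagRel_eq_zero (hs : s ∈ B.rels) (ht : t ∈ B.rels) (hst : s ≠ convRel t) :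
    pNum s t (diagRel Z) = 0 := by
  obtain ⟨x⟩ := B.nonempty
  rw [B.pNum_eq_card hs ht B.id_mem (mem_diagRel.mpr (rfl : x = x)), Finset.card_eq_zero,
    Finset.filter_eq_empty_iff]
  rintro z - ⟨hxz, hzx⟩
  exact hst (B.eq_of_mem_of_mem hs (B.conv_mem t ht) hxz (mem_convRel.mpr hzx))

lemma adjMat_mul_eq_sum_support (hs : s ∈ B.rels) (ht : t ∈ B.rels) (hst : s ≠ convRel t) :
    adjMat s * adjMat t = ∑ r ∈ (B.rels.erase (diagRel Z)).filter (pNum s t · ≠ 0),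
      (pNum s t r : ℂ) • adjMat r := by
  rw [B.adjMat_mul_eq_sum hs ht, ← Finset.add_sum_erase _ _ B.id_mem,
    B.pNum_diagRel_eq_zero hs ht hst, Nat.cast_zero, zero_smul, zero_add]
  refine (Finset.sum_filter_of_ne fun r _ h => ?_).symm
  rintro hr
  simp [hr] at h

lemma adjMat_add_add_ne_adjMat_add_two_smul {a b c d e : Finset (Z × Z)} (ha : a ∈ B.rels)
    (hb : b ∈ B.rels) (hc : c ∈ B.rels) (hd : d ∈ B.rels) (he : e ∈ B.rels) (hab : a ≠ b)
    (hac : a ≠ c) (hbc : b ≠ c) (hde : d ≠ e) :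
    adjMat a + adjMat b + adjMat c ≠ adjMat d + (2 : ℂ) • adjMat e := by
  intro h
  obtain ⟨⟨x, y⟩, hxy⟩ := B.nonempty_mem e he
  have hxd : (x, y) ∉ d := fun h' => hde (B.eq_of_mem_of_mem hd he h' hxy)
  have hdisj : Disjoint (a ∪ b) c := Finset.disjoint_union_left.mpr
    ⟨B.pairwise_disjoint a ha c hc hac, B.pairwise_disjoint b hb c hc hbc⟩
  rw [← adjMat_union (B.pairwise_disjoint a ha b hb hab), ← adjMat_union hdisj] at h
  have h2 : adjMat (a ∪ b ∪ c) x y = 2 := by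
    rw [h]
    simp [adjMat, hxy, hxd]
  rcases isZeroOne_adjMat (a ∪ b ∪ c) x y with h01 | h01 <;> rw [h01] at h2 <;> norm_num at h2

end AssocScheme

namespace KEquivalenced

variable {Z : Type*} [Fintype Z] [DecidableEq Z] {B : AssocScheme Z} {k : ℕ}
  {s t r : Finset (Z × Z)}

lemma valency_eq (hk : KEquivalenced B k) (hs : s ∈ B.rels) (hs1 : s ≠ diagRel Z) :
    valency s = k :=
  hk.2 s hs hs1

lemma sum_pNum_support (hk : KEquivalenced B k) (hs : s ∈ B.rels) (ht : t ∈ B.rels)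
    (hs1 : s ≠ diagRel Z) (ht1 : t ≠ diagRel Z) (hst : s ≠ convRel t) :
    ∑ r ∈ (B.rels.erase (diagRel Z)).filter (pNum s t · ≠ 0), pNum s t r = k := by
  have h := B.sum_pNum_mul_valency hs ht
  rw [← Finset.add_sum_erase _ _ B.id_mem, B.pNum_diagRel_eq_zero hs ht hst, zero_mul, zero_add,
    Finset.sum_congr rfl fun r hr => by
      rw [hk.valency_eq (Finset.mem_of_mem_erase hr) (Finset.ne_of_mem_erase hr)],
    ← Finset.sum_mul, hk.valency_eq hs hs1, hk.valency_eq ht ht1] at h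
  rw [Finset.sum_filter_ne_zero]
  exact Nat.eq_of_mul_eq_mul_right (hk.valency_eq hs hs1 ▸ B.valency_pos hs) h

/-- If `p_{st}^r = k`, the points of `xs` share their `t`-neighbours (those in `xr`), so for the
relation `c` joining two of them, `z₁` and `z₂`, `p_{tt*}^c = k`. A `t`-neighbour `w` of `z₁` then
has the `k + 1` points `{z₁} ∪ z₁c` as `t`-predecessors, although `|wt*| = k`. -/
lemma pNum_lt (hk : KEquivalenced B k) (hk2 : 1 < k) (hs : s ∈ B.rels) (ht : t ∈ B.rels)
    (hr : r ∈ B.rels) (hs1 : s ≠ diagRel Z) (ht1 : t ≠ diagRel Z) (hr1 : r ≠ diagRel Z) :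
    pNum s t r < k := by
  refine lt_of_le_of_ne (hk.valency_eq hs hs1 ▸ B.pNum_le_valency hs t r) fun hp => ?_
  obtain ⟨⟨x, y⟩, hxy⟩ := B.nonempty_mem r hr
  have hst : ∀ y' ∈ pointFiber x r, ∀ z ∈ pointFiber x s, (z, y') ∈ t := fun y' hy' z hz =>
    B.mem_of_pNum_eq_valency hs ht hr (by rw [hp, hk.valency_eq hs hs1])
      (mem_pointFiber.mp hy') (mem_pointFiber.mp hz)
  obtain ⟨z₁, hz₁, z₂, hz₂, hne⟩ := (Finset.one_lt_card (s := pointFiber x s)).mp <| by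
    rwa [B.card_pointFiber hs, hk.valency_eq hs hs1]
  obtain ⟨c, hc, hzc⟩ := B.cover (z₁, z₂)
  have hc1 : c ≠ diagRel Z := by
    rintro rfl
    exact hne (mem_diagRel.mp hzc)
  have htc : convRel t ∈ B.rels := B.conv_mem t ht
  have hpc : pNum t (convRel t) c = valency t := by
    refine le_antisymm (B.pNum_le_valency ht _ _) ?_
    rw [B.pNum_eq_card ht htc hc hzc, hk.valency_eq ht ht1, ← hk.valency_eq hr hr1,
      ← B.card_pointFiber hr x]
    exact Finset.card_le_card fun y' hy' => by simp [hst y' hy' z₁ hz₁, hst y' hy' z₂ hz₂]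
  obtain ⟨w, hw⟩ : (pointFiber z₁ t).Nonempty := Finset.card_pos.mp <| by
    rw [B.card_pointFiber ht, hk.valency_eq ht ht1]
    omega
  have hsub : insert z₁ (pointFiber z₁ c) ⊆ pointFiber w (convRel t) := by
    intro b hb
    rcases Finset.mem_insert.mp hb with rfl | hb
    · simpa using hw
    · exact mem_pointFiber.mpr <| B.mem_of_pNum_eq_valency ht htc hc hpc
        (mem_pointFiber.mp hb) (mem_pointFiber.mp hw)
  have hz₁c : z₁ ∉ pointFiber z₁ c := fun h =>
    hc1 (B.eq_of_mem_of_mem hc B.id_mem (mem_pointFiber.mp h) (mem_diagRel.mpr rfl))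
  have hcard := Finset.card_le_card hsub
  rw [Finset.card_insert_of_notMem hz₁c, B.card_pointFiber hc, B.card_pointFiber htc,
    hk.valency_eq hc hc1, hk.valency_eq htc (convRel_ne_diagRel ht1)] at hcard
  omega

end KEquivalenced

section Statements

variable {X Y : Type*} [Fintype X] [DecidableEq X] [Fintype Y] [DecidableEq Y]

theorem stmt2 (B : AssocScheme Y) (h3 : ThreeEquivalenced B)
    (u v : Finset (Y × Y)) (hu : u ∈ B.rels) (hv : v ∈ B.rels)
    (hu1 : u ≠ diagRel Y) (hv1 : v ≠ diagRel Y) (huv : u ≠ convRel v) :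
    Xor'
      (∃ w₁ w₂ w₃ : Finset (Y × Y),
        (w₁ ∈ B.rels ∧ w₁ ≠ diagRel Y) ∧ (w₂ ∈ B.rels ∧ w₂ ≠ diagRel Y) ∧
        (w₃ ∈ B.rels ∧ w₃ ≠ diagRel Y) ∧ w₁ ≠ w₂ ∧ w₁ ≠ w₃ ∧ w₂ ≠ w₃ ∧
        adjMat u * adjMat v = adjMat w₁ + adjMat w₂ + adjMat w₃)
      (∃ w₁ w₂ : Finset (Y × Y),
        (w₁ ∈ B.rels ∧ w₁ ≠ diagRel Y) ∧ (w₂ ∈ B.rels ∧ w₂ ≠ diagRel Y) ∧ w₁ ≠ w₂ ∧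
        adjMat u * adjMat v = adjMat w₁ + (2 : ℂ) • adjMat w₂) := by
  have hk : KEquivalenced B 3 := h3
  have hprod := B.adjMat_mul_eq_sum_support hu hv huv
  have hsum := hk.sum_pNum_support hu hv hu1 hv1 huv
  set S := (B.rels.erase (diagRel Y)).filter (pNum u v · ≠ 0)
  have hS : ∀ w ∈ S, w ∈ B.rels ∧ w ≠ diagRel Y := fun w hw =>
    have hw' := (Finset.mem_filter.mp hw).1
    ⟨Finset.mem_of_mem_erase hw', Finset.ne_of_mem_erase hw'⟩
  have hvals : ∀ w ∈ S, pNum u v w = 1 ∨ pNum u v w = 2 := by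
    intro w hw
    have hlt := hk.pNum_lt (by norm_num) hu hv (hS w hw).1 hu1 hv1 (hS w hw).2
    have h0 := (Finset.mem_filter.mp hw).2
    omega
  refine (xor_iff_or_and_not_and _ _).mpr ⟨?_, ?_⟩
  · rcases Finset.eq_triple_or_pair_of_sum_eq_three hvals hsum with
      ⟨a, b, c, hab, hac, hbc, hS3, ha, hb, hc⟩ | ⟨a, b, hab, hS2, ha, hb⟩
    · refine Or.inl ⟨a, b, c, hS a (by simp [hS3]), hS b (by simp [hS3]), hS c (by simp [hS3]),
        hab, hac, hbc, ?_⟩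
      rw [hprod, hS3, Finset.sum_insert (by simp [hab, hac]), Finset.sum_pair hbc, ha, hb, hc]
      simp [add_assoc]
    · refine Or.inr ⟨a, b, hS a (by simp [hS2]), hS b (by simp [hS2]), hab, ?_⟩
      rw [hprod, hS2, Finset.sum_pair hab, ha, hb]
      simp
  · rintro ⟨⟨a, b, c, ⟨ha, -⟩, ⟨hb, -⟩, ⟨hc, -⟩, hab, hac, hbc, h3⟩,
      ⟨d, e, ⟨hd, -⟩, ⟨he, -⟩, hde, h2⟩⟩
    exact B.adjMat_add_add_ne_adjMat_add_two_smul ha hb hc hd he hab hac hbc hde (h3.symm.trans h2)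

end Statements
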